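/- If a graph G is Eulerian (connected with all vertex degrees even) and has e edges with e ≡ 1 or 2 (mod 4), then G is not graceful. In particular, the sum Σ_{edges {u,v}} |f(u)-f(v)| = e(e+1)/2 must have the same parity as Σ |f(u)-f(v)| taken mod 2, which for an Eulerian graph is even, giving a contradiction when e(e+1)/2 is odd. -/

import Mathlib

/-!
Modulo 2 the label `|f u - f v|` of an edge equals `f u + f v`, so the sum of all edge labels is
congruent to `∑ v, deg v * f v`, which is even when every degree is even. For a graceful labelling
that sum is `1 + ⋯ + e = e (e + 1) / 2`, which is odd when `e ≡ 1, 2 (mod 4)`.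
-/

/-- The induced edge label `|f u - f v|` (computed in ℕ as `max - min`). -/
def edgeLabel {V : Type*} (f : V → ℕ) : Sym2 V → ℕ :=
  Sym2.lift ⟨fun u v => max (f u) (f v) - min (f u) (f v), fun u v => by
    simp [max_comm, min_comm]⟩

open Finset

theorem Finset.sum_Icc_id_mul_two (n : ℕ) : (∑ i ∈ Icc 1 n, i) * 2 = n * (n + 1) := by
  have h := sum_range_id_mul_two (n + 1)
  rw [range_eq_Ico, sum_eq_sum_Ico_succ_bot n.succ_pos, Nat.succ_eq_add_one,
    Ico_add_one_right_eq_Icc] at h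
  simpa [mul_comm] using h

theorem Finset.not_even_sum_Icc_id {n : ℕ} (hn : n % 4 = 1 ∨ n % 4 = 2) :
    ¬ Even (∑ i ∈ Icc 1 n, i) := by
  have hmod : n * (n + 1) % 4 = 2 := by
    rw [Nat.mul_mod, Nat.add_mod]
    rcases hn with h | h <;> rw [h]
  have := sum_Icc_id_mul_two n
  rw [Nat.even_iff]
  omega

theorem edgeLabel_cast_zmod_two {V : Type*} [DecidableEq V] (f : V → ℕ) {s : Sym2 V}
    (hs : ¬ s.IsDiag) : (edgeLabel f s : ZMod 2) = ∑ v ∈ s.toFinset, (f v : ZMod 2) := by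
  induction s with
  | _ u v =>
    rw [Sym2.toFinset_mk_eq, sum_pair (by simpa using hs)]
    change ((max (f u) (f v) - min (f u) (f v) : ℕ) : ZMod 2) = _
    rw [Nat.cast_sub min_le_max, CharTwo.sub_eq_add, ← Nat.cast_add, max_add_min, Nat.cast_add]

namespace SimpleGraph

variable {V : Type*} [Fintype V] [DecidableEq V] (G : SimpleGraph V) [DecidableRel G.Adj]

theorem sum_edgeFinset_sum_toFinset {M : Type*} [AddCommMonoid M] (g : V → M) :
    ∑ s ∈ G.edgeFinset, ∑ v ∈ s.toFinset, g v = ∑ v, G.degree v • g v := by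
  rw [sum_comm' (s' := fun v => G.incidenceFinset v) (t' := univ)]
  · simp only [sum_const, card_incidenceFinset_eq_degree]
  · intro s v
    simp [incidenceFinset_eq_filter, Sym2.mem_toFinset]

theorem even_sum_edgeLabel (heven : ∀ v, Even (G.degree v)) (f : V → ℕ) :
    Even (∑ s ∈ G.edgeFinset, edgeLabel f s) := by
  rw [← ZMod.natCast_eq_zero_iff_even, Nat.cast_sum,
    sum_congr rfl fun s hs =>
      edgeLabel_cast_zmod_two f (G.not_isDiag_of_mem_edgeSet (mem_edgeFinset.1 hs)),
    sum_edgeFinset_sum_toFinset]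
  exact sum_eq_zero fun v _ => by rw [nsmul_eq_mul, (heven v).natCast_zmod_two, zero_mul]

end SimpleGraph

theorem stmt17_general {V : Type*} [Fintype V] [DecidableEq V]
    (G : SimpleGraph V) [DecidableRel G.Adj] (e : ℕ)
    (heven : ∀ v : V, Even (G.degree v))
    (hmod : e % 4 = 1 ∨ e % 4 = 2) :
    ¬ ∃ f : V → ℕ, Function.Injective f ∧ (∀ v, f v ≤ e) ∧
      Set.BijOn (edgeLabel f) G.edgeSet (Set.Icc 1 e) := by
  rintro ⟨f, -, -, hbij⟩
  rw [← G.coe_edgeFinset, ← coe_Icc] at hbij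
  have hsum : ∑ s ∈ G.edgeFinset, edgeLabel f s = ∑ i ∈ Icc 1 e, i :=
    sum_nbij (edgeLabel f) (fun _ hs => hbij.mapsTo hs) hbij.injOn hbij.surjOn fun _ _ => rfl
  exact not_even_sum_Icc_id hmod (hsum ▸ G.even_sum_edgeLabel heven f)

/-- An Eulerian graph (connected with all degrees even) with `e` edges,
`e ≡ 1` or `2 (mod 4)`, is not graceful. -/
theorem stmt17 {V : Type*} [Fintype V] [DecidableEq V]
    (G : SimpleGraph V) [DecidableRel G.Adj] (e : ℕ)
    (he : G.edgeFinset.card = e)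
    (hconn : G.Connected) (heven : ∀ v : V, Even (G.degree v))
    (hmod : e % 4 = 1 ∨ e % 4 = 2) :
    ¬ ∃ f : V → ℕ, Function.Injective f ∧ (∀ v, f v ≤ e) ∧
      Set.BijOn (edgeLabel f) G.edgeSet (Set.Icc 1 e) :=
  stmt17_general G e heven hmod
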